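/- Let k be a field of characteristic 0 with algebraic closure k̄, A a k-algebra, and I an ideal of A with Noether exponent μ (the smallest positive integer with (√I)^μ ⊆ I). Then the Noether exponent of the extended ideal k̄ ⊗_k I in k̄ ⊗_k A is at most μ. -/

import Mathlib

/-!
The extension of `√I` to `k̄ ⊗[k] A` is the kernel of `k̄ ⊗[k] A → k̄ ⊗[k] (A ⧸ √I)`. Since `k` is
perfect, `k̄ ⊗[k] -` preserves reducedness, so this kernel is a radical ideal containing the
extension of `I`, hence containing its radical. Raising to the `μ`-th power and using
`(√I)^μ ≤ I` gives the bound.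

Reducedness of `k̄ ⊗[k] B` reduces to finite subextensions `L`, which are étale over `k`.
An element of `B ⊗[k] L` is determined by its coordinates in a `k`-basis of `L`; a nilpotent
one vanishes in each `κ(p) ⊗[k] L`, which is reduced as an unramified algebra over a field,
so its coordinates lie in every prime of `B`.
-/

open scoped TensorProduct

open Algebra.TensorProduct in
theorem Algebra.TensorProduct.basis_repr_map {k R S L ι : Type*} [Field k] [CommRing R]
    [CommRing S] [CommRing L] [Algebra k R] [Algebra k S] [Algebra k L]
    (b : Module.Basis ι k L) (f : R →ₐ[k] S) (y : R ⊗[k] L) (i : ι) :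
    (basis S b).repr (map f (AlgHom.id k L) y) i = f ((basis R b).repr y i) := by
  induction y using TensorProduct.induction_on with
  | zero => simp
  | tmul r l => simp [basis_repr_tmul]
  | add y z hy hz => simp [hy, hz]

open Algebra.TensorProduct in
theorem isReduced_tensorProduct_of_formallyUnramified (k B L : Type*) [Field k] [CommRing B]
    [IsReduced B] [Algebra k B] [CommRing L] [Algebra k L] [Algebra.FormallyUnramified k L]
    [Algebra.EssFiniteType k L] : IsReduced (B ⊗[k] L) := by
  refine ⟨fun y hy ↦ ?_⟩
  let b := Module.Basis.ofVectorSpace k L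
  suffices ∀ i, (basis B b).repr y i = 0 from (basis B b).repr.injective (by ext i; simp [this])
  intro i
  refine IsReduced.eq_zero _ (nilpotent_iff_mem_prime.mpr fun p _ ↦ ?_)
  let π : B →ₐ[k] p.ResidueField := IsScalarTower.toAlgHom k B p.ResidueField
  have : IsReduced (p.ResidueField ⊗[k] L) :=
    Algebra.FormallyUnramified.isReduced_of_field p.ResidueField _
  have hy_map : map π (AlgHom.id k L) y = 0 := (hy.map _).eq_zero
  have h_coord := basis_repr_map b π y i
  rw [hy_map, map_zero] at h_coord
  simpa [π] using h_coord.symm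

theorem isReduced_tensorProduct_of_isAlgebraic (k K B : Type*) [Field k] [PerfectField k]
    [Field K] [Algebra k K] [Algebra.IsAlgebraic k K] [CommRing B] [IsReduced B] [Algebra k B] :
    IsReduced (K ⊗[k] B) := by
  suffices IsReduced (B ⊗[k] K) from
    isReduced_of_injective _ (Algebra.TensorProduct.comm k K B).injective
  refine IsReduced.tensorProduct_of_flat_of_forall_fg fun D hD ↦ ?_
  let : Field D := (Subalgebra.isField_of_algebraic D).toField
  have : Algebra.IsAlgebraic k D := .of_injective D.val Subtype.val_injective
  have : Algebra.FiniteType k D := (Subalgebra.fg_iff_finiteType D).mp hD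
  have : Algebra.FormallyUnramified k D := .of_isSeparable k D
  exact isReduced_tensorProduct_of_formallyUnramified k B D

theorem Ideal.isRadical_map_includeRight (k K : Type*) [Field k] [PerfectField k]
    [Field K] [Algebra k K] [Algebra.IsAlgebraic k K] {A : Type*} [CommRing A] [Algebra k A]
    {J : Ideal A} (hJ : J.IsRadical) :
    (J.map (Algebra.TensorProduct.includeRight : A →ₐ[k] K ⊗[k] A)).IsRadical := by
  have : IsReduced (A ⧸ J) := (Ideal.isRadical_iff_quotient_reduced J).mp hJ
  have : IsReduced (K ⊗[k] (A ⧸ J)) := isReduced_tensorProduct_of_isAlgebraic k K (A ⧸ J)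
  have hsurj := Ideal.Quotient.mkₐ_surjective k J
  have hker := Algebra.TensorProduct.lTensor_ker (A := K) _ hsurj
  rw [show RingHom.ker (Ideal.Quotient.mkₐ k J) = J from Ideal.mk_ker] at hker
  rw [← hker]
  exact (RingHom.ker_isRadical_iff_reduced_of_surjective
    (Algebra.TensorProduct.map_surjective (AlgHom.id k K) _ Function.surjective_id hsurj)).mpr this

theorem stmt_4_general (k : Type*) [Field k] [CharZero k] {A : Type*} [CommRing A] [Algebra k A]
    (I : Ideal A) (μ : ℕ) (hNoether : I.radical ^ μ ≤ I) :
    (I.map (Algebra.TensorProduct.includeRight :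
        A →ₐ[k] TensorProduct k (AlgebraicClosure k) A).toRingHom).radical ^ μ ≤
      I.map (Algebra.TensorProduct.includeRight :
        A →ₐ[k] TensorProduct k (AlgebraicClosure k) A).toRingHom := by
  let ι : A →ₐ[k] AlgebraicClosure k ⊗[k] A := Algebra.TensorProduct.includeRight
  have hrad : (I.map ι).radical ≤ I.radical.map ι :=
    (Ideal.isRadical_map_includeRight k _ I.radical_isRadical).radical_le_iff.mpr
      (Ideal.map_mono I.le_radical)
  calc (I.map ι).radical ^ μ ≤ (I.radical.map ι) ^ μ := Ideal.pow_right_mono hrad μ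
    _ = (I.radical ^ μ).map ι := (Ideal.map_pow _ _ _).symm
    _ ≤ I.map ι := Ideal.map_mono hNoether

theorem stmt_4 (k : Type*) [Field k] [CharZero k] {A : Type*} [CommRing A] [Algebra k A]
    (I : Ideal A) (μ : ℕ) (hμ : 0 < μ) (hNoether : I.radical ^ μ ≤ I) :
    (I.map (Algebra.TensorProduct.includeRight :
        A →ₐ[k] TensorProduct k (AlgebraicClosure k) A).toRingHom).radical ^ μ ≤
      I.map (Algebra.TensorProduct.includeRight :
        A →ₐ[k] TensorProduct k (AlgebraicClosure k) A).toRingHom :=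
  stmt_4_general k I μ hNoether
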